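/- arXiv:1408.6574 — 2 statements merged into one kernel-verified Lean document; each statement's English description precedes it below -/
import Mathlib

section
/- Let u : ℝ² → ℝ be continuously differentiable with sup_{|x|≥1} |∇u(x)| ≤ C for some constant C, u(x) ≤ 0 for all x, and suppose the function x ↦ 1 - e^{u(x)} is integrable on ℝ². Then u(x) → 0 as |x| → ∞. -/
/-! If `u ≤ 0` fell below `-ε` at points `x` of arbitrarily large norm, the gradient bound
would keep `u ≤ -ε / 2` on a ball of fixed radius around each such `x`, so the integral of
`1 - exp u` over that ball would stay above a fixed positive constant. This is impossible, since
the integral of an integrable function over a ball of fixed radius tends to `0` as the centre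
goes to infinity. -/

open Real Filter MeasureTheory Metric Set Topology

section IntegralOverBall

variable {X F : Type*} [PseudoMetricSpace X] [MeasurableSpace X] [OpensMeasurableSpace X]
  [NormedAddCommGroup F] {μ : Measure X} {f : X → F}

theorem MeasureTheory.Integrable.tendsto_setIntegral_compl_closedBall_nat [NormedSpace ℝ F]
    (hf : Integrable f μ) (x₀ : X) :
    Tendsto (fun n : ℕ => ∫ y in (closedBall x₀ n)ᶜ, f y ∂μ) atTop (𝓝 0) := by
  have h := tendsto_setIntegral_of_antitone (μ := μ) (f := f)
    (fun n : ℕ => (measurableSet_closedBall (x := x₀) (ε := n)).compl)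
    (fun m n hmn => compl_subset_compl.2 (closedBall_subset_closedBall (Nat.cast_le.2 hmn)))
    ⟨0, hf.integrableOn⟩
  rwa [← compl_iUnion, iUnion_closedBall_nat, compl_univ, setIntegral_empty] at h

theorem MeasureTheory.Integrable.tendsto_setIntegral_norm_ball_cocompact [ProperSpace X]
    (hf : Integrable f μ) (r : ℝ) :
    Tendsto (fun x => ∫ y in ball x r, ‖f y‖ ∂μ) (cocompact X) (𝓝 0) := by
  rcases isEmpty_or_nonempty X with hX | ⟨⟨x₀⟩⟩
  · exact tendsto_of_isEmpty
  refine tendsto_order.2 ⟨fun a ha => Eventually.of_forall fun x =>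
    ha.trans_le (setIntegral_nonneg measurableSet_ball fun y _ => norm_nonneg _), fun c hc => ?_⟩
  obtain ⟨N, hN⟩ := ((hf.norm.tendsto_setIntegral_compl_closedBall_nat x₀).eventually
    (gt_mem_nhds hc)).exists
  filter_upwards [(isCompact_closedBall x₀ (N + r)).compl_mem_cocompact] with x hx
  have hdist : N + r ≤ dist x₀ x := dist_comm x x₀ ▸ (not_le.1 (mem_closedBall.not.1 hx)).le
  have hsub : ball x r ⊆ (closedBall x₀ N)ᶜ := (closedBall_disjoint_ball hdist).subset_compl_left
  exact (setIntegral_mono_set hf.norm.integrableOn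
    (Eventually.of_forall fun _ => norm_nonneg _) hsub.eventuallyLE).trans_lt hN

end IntegralOverBall

theorem le_add_mul_of_norm_fderiv_le_on_ball {E : Type*} [NormedAddCommGroup E] [NormedSpace ℝ E]
    {u : E → ℝ} {x : E} {r K : ℝ} (hd : ∀ y ∈ ball x r, DifferentiableAt ℝ u y)
    (hK : ∀ y ∈ ball x r, ‖fderiv ℝ u y‖ ≤ K) {y : E} (hy : y ∈ ball x r) :
    u y ≤ u x + K * r := by
  have hx : x ∈ ball x r := mem_ball_self (nonempty_ball.1 ⟨y, hy⟩)
  have hlip := (convex_ball x r).norm_image_sub_le_of_norm_fderiv_le hd hK hx hy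
  have hyx : ‖y - x‖ ≤ r := (mem_ball_iff_norm.1 hy).le
  have hdiff : u y - u x ≤ K * r := (Real.le_norm_self _).trans
    (hlip.trans (mul_le_mul_of_nonneg_left hyx ((norm_nonneg _).trans (hK x hx))))
  linarith

theorem measureReal_ball_mul_one_sub_exp_le_setIntegral {E : Type*} [NormedAddCommGroup E]
    [NormedSpace ℝ E] [ProperSpace E] [MeasurableSpace E] [OpensMeasurableSpace E] {μ : Measure E}
    [IsFiniteMeasureOnCompacts μ] {u : E → ℝ} {x : E} {r K : ℝ}
    (hd : ∀ y ∈ ball x r, DifferentiableAt ℝ u y) (hK : ∀ y ∈ ball x r, ‖fderiv ℝ u y‖ ≤ K)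
    (hint : IntegrableOn (fun y => 1 - exp (u y)) (ball x r) μ) :
    μ.real (ball x r) * (1 - exp (u x + K * r)) ≤ ∫ y in ball x r, 1 - exp (u y) ∂μ :=
  setIntegral_ge_of_const_le measurableSet_ball measure_ball_lt_top.ne
    (fun _ hy => sub_le_sub_left (exp_le_exp.2 (le_add_mul_of_norm_fderiv_le_on_ball hd hK hy)) 1)
    hint

theorem stmt2 (u : EuclideanSpace ℝ (Fin 2) → ℝ) (C : ℝ)
    (hu : ContDiff ℝ 1 u)
    (hgrad : ∀ x, 1 ≤ ‖x‖ → ‖fderiv ℝ u x‖ ≤ C)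
    (hneg : ∀ x, u x ≤ 0)
    (hint : Integrable (fun x => 1 - Real.exp (u x))) :
    Tendsto u (cocompact (EuclideanSpace ℝ (Fin 2))) (nhds 0) := by
  refine Metric.tendsto_nhds.2 fun ε hε => ?_
  obtain ⟨r, hr, hCr⟩ := exists_pos_mul_lt (half_pos hε) C
  set c := volume.real (ball (0 : EuclideanSpace ℝ (Fin 2)) r) * (1 - exp (-(ε / 2)))
  have hc : 0 < c := mul_pos
    (ENNReal.toReal_pos (measure_ball_pos volume 0 hr).ne' measure_ball_lt_top.ne)
    (sub_pos.2 (exp_lt_one_iff.2 (by linarith)))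
  filter_upwards [(hint.tendsto_setIntegral_norm_ball_cocompact r).eventually (gt_mem_nhds hc),
    tendsto_norm_cocompact_atTop.eventually_ge_atTop (1 + r)] with x hsmall hfar
  rw [Real.dist_0_eq_abs, abs_of_nonpos (hneg x)]
  by_contra! hux
  have hball : ∀ y ∈ ball x r, 1 ≤ ‖y‖ := fun y hy => by
    have := norm_sub_norm_le x y
    have := mem_ball_iff_norm'.1 hy
    linarith
  have hlower := measureReal_ball_mul_one_sub_exp_le_setIntegral
    (fun _ _ => (hu.differentiable one_ne_zero).differentiableAt)
    (fun y hy => hgrad y (hball y hy)) hint.integrableOn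
  rw [Measure.addHaar_real_ball_center] at hlower
  have hc_le :
      c ≤ volume.real (ball (0 : EuclideanSpace ℝ (Fin 2)) r) * (1 - exp (u x + C * r)) := by
    refine mul_le_mul_of_nonneg_left ?_ measureReal_nonneg
    gcongr
    linarith
  have hnorm : ∫ y in ball x r, 1 - exp (u y) ≤ ∫ y in ball x r, ‖1 - exp (u y)‖ :=
    (Real.le_norm_self _).trans (norm_integral_le_integral_norm _)
  linarith
end

section
/- Let u₁, u₂ : ℝ² → ℝ be a topological solution of the entire system Δu₁ + e^{u₂}(1 - e^{u₁}) = 0, Δu₂ + e^{u₁}(1 - e^{u₂}) = 0 (no vortex points), with u_i ≤ 0, u_i(x) → 0 as |x| → ∞ exponentially fast, and with 1 - e^{u_i} ∈ L¹(ℝ²). Then ∫_{ℝ²}(1 - e^{u₁})(1 - e^{u₂}) dx = 0 and hence u₁ ≡ u₂ ≡ 0. -/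
set_option maxHeartbeats 1000000

open Real Filter MeasureTheory Topology

noncomputable def lap2 (u : EuclideanSpace ℝ (Fin 2) → ℝ) (x : EuclideanSpace ℝ (Fin 2)) : ℝ :=
  ∑ i : Fin 2, fderiv ℝ (fun y => fderiv ℝ u y (EuclideanSpace.single i (1:ℝ))) x
    (EuclideanSpace.single i (1:ℝ))

section aux

variable {E : Type*} [NormedAddCommGroup E] [NormedSpace ℝ E]

lemma line_hasDerivAt (z e : E) (t : ℝ) :
    HasDerivAt (fun s : ℝ => z + s • e) e t := by
  simpa using ((hasDerivAt_id t).smul_const e).const_add z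

lemma hasDerivAt_comp_line (u : E → ℝ) (hu : Differentiable ℝ u) (z e : E) (t : ℝ) :
    HasDerivAt (fun s : ℝ => u (z + s • e)) (fderiv ℝ u (z + t • e) e) t := by
  have h := ((hu (z + t • e)).hasFDerivAt).comp_hasDerivAt t (line_hasDerivAt z e t)
  exact h

lemma hasDerivAt_D (u : E → ℝ) (hu : ContDiff ℝ (⊤ : ℕ∞) u) (z e : E) :
    HasDerivAt (fun t : ℝ => fderiv ℝ u (z + t • e) e)
      (fderiv ℝ (fun y => fderiv ℝ u y e) z e) 0 := by
  have hF : Differentiable ℝ (fun y => fderiv ℝ u y e) :=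
    ((hu.fderiv_right (m := 1) (WithTop.coe_le_coe.mpr le_top)).clm_apply contDiff_const).differentiable one_ne_zero
  have h := ((hF (z + (0:ℝ) • e)).hasFDerivAt).comp_hasDerivAt 0 (line_hasDerivAt z e 0)
  simp only [zero_smul, add_zero] at h
  exact h

/-- At a local minimum of a differentiable function whose derivative is differentiable,
the second derivative is nonnegative. -/
lemma second_deriv_nonneg {g : ℝ → ℝ} (hg : Differentiable ℝ g) {c : ℝ}
    (hc : HasDerivAt (deriv g) c 0) (hmin : IsLocalMin g 0) : 0 ≤ c := by
  by_contra hneg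
  push_neg at hneg
  have hd0 : deriv g 0 = 0 := hmin.deriv_eq_zero
  have hslope : Tendsto (slope (deriv g) 0) (𝓝[≠] 0) (𝓝 c) :=
    hasDerivAt_iff_tendsto_slope.mp hc
  have hev : ∀ᶠ t in 𝓝[≠] (0:ℝ), slope (deriv g) 0 t < 0 :=
    hslope.eventually (eventually_lt_nhds hneg)
  have hev' : ∀ᶠ t in 𝓝[>] (0:ℝ), slope (deriv g) 0 t < 0 :=
    hev.filter_mono (nhdsWithin_mono 0 (fun x hx => ne_of_gt hx))
  obtain ⟨δ, hδ, hδsub⟩ := mem_nhdsGT_iff_exists_Ioo_subset.mp hev'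
  obtain ⟨η, hη, hηmin⟩ := Metric.eventually_nhds_iff.mp hmin
  obtain ⟨τ, hτdef⟩ : ∃ t : ℝ, t = min δ η / 2 := ⟨_, rfl⟩
  have hτpos : 0 < τ := hτdef ▸ half_pos (lt_min hδ hη)
  have hτδ : τ < δ := by
    have h := min_le_left δ η
    rw [hτdef]; linarith
  have hderivneg : ∀ x ∈ Set.Ioo (0:ℝ) τ, deriv g x < 0 := by
    intro x hx
    have hxδ : x ∈ Set.Ioo (0:ℝ) δ := ⟨hx.1, lt_trans hx.2 hτδ⟩
    have hs := hδsub hxδ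
    have hs' : x⁻¹ * deriv g x < 0 := by
      simpa [slope, hd0] using hs
    have hxi : 0 < x⁻¹ := inv_pos.mpr hx.1
    nlinarith
  have hanti : StrictAntiOn g (Set.Icc 0 τ) := by
    apply strictAntiOn_of_deriv_neg (convex_Icc 0 τ) hg.continuous.continuousOn
    intro x hx
    rw [interior_Icc] at hx
    exact hderivneg x hx
  have h1 : g τ < g 0 := hanti ⟨le_refl 0, le_of_lt hτpos⟩ ⟨le_of_lt hτpos, le_refl τ⟩ hτpos
  have h2 : g 0 ≤ g τ := by
    apply hηmin
    have hτη : τ < η := by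
      have h := min_le_right δ η
      rw [hτdef]; linarith
    simp [abs_of_pos hτpos]
    linarith
  linarith

end aux

theorem stmt5 (u₁ u₂ : EuclideanSpace ℝ (Fin 2) → ℝ)
    (h1 : ContDiff ℝ (⊤ : ℕ∞) u₁) (h2 : ContDiff ℝ (⊤ : ℕ∞) u₂)
    (heq1 : ∀ x, lap2 u₁ x + Real.exp (u₂ x) * (1 - Real.exp (u₁ x)) = 0)
    (heq2 : ∀ x, lap2 u₂ x + Real.exp (u₁ x) * (1 - Real.exp (u₂ x)) = 0)
    (hneg1 : ∀ x, u₁ x ≤ 0) (hneg2 : ∀ x, u₂ x ≤ 0)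
    (hdecay : ∃ C a : ℝ, 0 < a ∧ ∀ x, |u₁ x| + |u₂ x| ≤ C * Real.exp (-a * ‖x‖))
    (hint1 : Integrable (fun x => 1 - Real.exp (u₁ x)))
    (hint2 : Integrable (fun x => 1 - Real.exp (u₂ x))) :
    (∫ x, (1 - Real.exp (u₁ x)) * (1 - Real.exp (u₂ x)) = 0) ∧
    (∀ x, u₁ x = 0) ∧ (∀ x, u₂ x = 0) := by
  obtain ⟨v, hv⟩ : ∃ f : EuclideanSpace ℝ (Fin 2) → ℝ, f = fun x => u₁ x + u₂ x := ⟨_, rfl⟩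
  have hvx : ∀ x, v x = u₁ x + u₂ x := fun x => by rw [hv]
  have hvneg : ∀ x, v x ≤ 0 := fun x => (hvx x) ▸ add_nonpos (hneg1 x) (hneg2 x)
  have hvcont : Continuous v := hv ▸ (h1.continuous).add (h2.continuous)
  -- Main claim: v ≥ 0 everywhere
  have hvnonneg : ∀ x, 0 ≤ v x := by
    by_contra hcon
    push_neg at hcon
    obtain ⟨x₀, hx₀⟩ := hcon
    obtain ⟨C, a, ha, hC⟩ := hdecay
    have hCpos : 0 ≤ C := by
      have := hC 0
      have h0 : (0:ℝ) ≤ |u₁ 0| + |u₂ 0| := by positivity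
      nlinarith [Real.exp_pos (-a * ‖(0 : EuclideanSpace ℝ (Fin 2))‖)]
    obtain ⟨ε, hεdef⟩ : ∃ e : ℝ, e = -v x₀ / 2 := ⟨_, rfl⟩
    have hεpos : 0 < ε := by rw [hεdef]; exact div_pos (neg_pos.mpr hx₀) two_pos
    -- choose R with C * exp (-a R) < ε and R ≥ ‖x₀‖
    have htend : Tendsto (fun R : ℝ => C * Real.exp (-a * R)) atTop (𝓝 0) := by
      have h1' : Tendsto (fun R : ℝ => -a * R) atTop atBot := by
        have h : Tendsto (fun R : ℝ => a * R) atTop atTop := tendsto_id.const_mul_atTop ha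
        exact (tendsto_neg_atTop_atBot.comp h).congr (fun x => by simp [neg_mul])
      have := Real.tendsto_exp_atBot.comp h1'
      simpa using this.const_mul C
    obtain ⟨R₀, hR₀⟩ := (htend.eventually (eventually_lt_nhds hεpos)).exists_forall_of_atTop
    obtain ⟨R, hRdef⟩ : ∃ r : ℝ, r = max R₀ ‖x₀‖ := ⟨_, rfl⟩
    have hRx₀ : ‖x₀‖ ≤ R := hRdef ▸ le_max_right _ _
    have hRsmall : ∀ y : EuclideanSpace ℝ (Fin 2), R ≤ ‖y‖ → |v y| < ε := by
      intro y hy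
      have hb := hC y
      have hmono : Real.exp (-a * ‖y‖) ≤ Real.exp (-a * R) := by
        apply Real.exp_le_exp.mpr
        nlinarith
      have hR0 : C * Real.exp (-a * R) < ε := by
        have hRR : R₀ ≤ R := hRdef ▸ le_max_left _ _
        have h2' := hR₀ R hRR
        exact h2'
      have h4 : |v y| ≤ |u₁ y| + |u₂ y| := by rw [hvx y]; exact abs_add_le _ _
      calc |v y| ≤ C * Real.exp (-a * ‖y‖) := le_trans h4 hb
        _ ≤ C * Real.exp (-a * R) := by nlinarith
        _ < ε := hR0
    -- minimize v on closed ball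
    have hK : IsCompact (Metric.closedBall (0 : EuclideanSpace ℝ (Fin 2)) R) :=
      isCompact_closedBall 0 R
    have hx₀K : x₀ ∈ Metric.closedBall (0 : EuclideanSpace ℝ (Fin 2)) R := by
      simpa [Metric.mem_closedBall, dist_zero_right] using hRx₀
    obtain ⟨z, hzK, hzmin⟩ := hK.exists_isMinOn ⟨x₀, hx₀K⟩ hvcont.continuousOn
    have hzx₀ : v z ≤ v x₀ := hzmin hx₀K
    -- z is a global minimum
    have hzglobal : ∀ y, v z ≤ v y := by
      intro y
      by_cases hy : y ∈ Metric.closedBall (0 : EuclideanSpace ℝ (Fin 2)) R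
      · exact hzmin hy
      · have hyR : R ≤ ‖y‖ := by
          simp only [Metric.mem_closedBall, dist_zero_right, not_le] at hy
          linarith
        have hsm := hRsmall y hyR
        have habs : -ε < v y := (abs_lt.mp hsm).1
        rw [hεdef] at habs
        linarith
    -- second derivatives nonneg at z in each direction
    have hkey : ∀ i : Fin 2,
        0 ≤ fderiv ℝ (fun y => fderiv ℝ u₁ y (EuclideanSpace.single i (1:ℝ))) z
              (EuclideanSpace.single i (1:ℝ)) +
            fderiv ℝ (fun y => fderiv ℝ u₂ y (EuclideanSpace.single i (1:ℝ))) z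
              (EuclideanSpace.single i (1:ℝ)) := by
      intro i
      obtain ⟨e, he⟩ : ∃ w : EuclideanSpace ℝ (Fin 2), w = EuclideanSpace.single i (1:ℝ) :=
        ⟨_, rfl⟩
      obtain ⟨g, hg⟩ : ∃ f : ℝ → ℝ, f = fun t => v (z + t • e) := ⟨_, rfl⟩
      have hd1 : Differentiable ℝ u₁ := h1.differentiable (by simp)
      have hd2 : Differentiable ℝ u₂ := h2.differentiable (by simp)
      have hgd : ∀ t, HasDerivAt g
          (fderiv ℝ u₁ (z + t • e) e + fderiv ℝ u₂ (z + t • e) e) t := by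
        intro t
        have h := (hasDerivAt_comp_line u₁ hd1 z e t).add (hasDerivAt_comp_line u₂ hd2 z e t)
        have hgeq : g = fun s => u₁ (z + s • e) + u₂ (z + s • e) := by
          rw [hg, hv]
        rw [hgeq]
        exact h
      have hgdiff : Differentiable ℝ g := fun t => (hgd t).differentiableAt
      have hderiv_g : deriv g = fun t =>
          fderiv ℝ u₁ (z + t • e) e + fderiv ℝ u₂ (z + t • e) e := by
        funext t; exact (hgd t).deriv
      have hsecond : HasDerivAt (deriv g)
          (fderiv ℝ (fun y => fderiv ℝ u₁ y e) z e +
           fderiv ℝ (fun y => fderiv ℝ u₂ y e) z e) 0 := by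
        rw [hderiv_g]
        exact (hasDerivAt_D u₁ h1 z e).add (hasDerivAt_D u₂ h2 z e)
      have hmin : IsLocalMin g 0 := by
        apply Filter.Eventually.of_forall
        intro t
        have hg0 : g 0 = v z := by rw [hg]; simp
        have hgt : g t = v (z + t • e) := by rw [hg]
        rw [hg0, hgt]
        exact hzglobal _
      have hres := second_deriv_nonneg hgdiff hsecond hmin
      rw [he] at hres
      exact hres
    have hsum : 0 ≤ lap2 u₁ z + lap2 u₂ z := by
      unfold lap2
      rw [← Finset.sum_add_distrib]
      refine Finset.sum_nonneg fun i _ => ?_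
      have h := hkey i
      exact h
    -- but the PDE forces strict negativity
    have he1 := heq1 z
    have he2 := heq2 z
    have hvz : v z < 0 := lt_of_le_of_lt hzx₀ hx₀
    rw [hvx z] at hvz
    have h1z : Real.exp (u₁ z) ≤ 1 := Real.exp_le_one_iff.mpr (hneg1 z)
    have h2z : Real.exp (u₂ z) ≤ 1 := Real.exp_le_one_iff.mpr (hneg2 z)
    have hone : Real.exp (u₁ z) < 1 ∨ Real.exp (u₂ z) < 1 := by
      rcases lt_or_ge (u₁ z) 0 with h | h
      · exact Or.inl (Real.exp_lt_one_iff.mpr h)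
      · have hu1 : u₁ z = 0 := le_antisymm (hneg1 z) h
        have hu2 : u₂ z < 0 := by linarith
        exact Or.inr (Real.exp_lt_one_iff.mpr hu2)
    have hp1 : 0 < Real.exp (u₁ z) := Real.exp_pos _
    have hp2 : 0 < Real.exp (u₂ z) := Real.exp_pos _
    rcases hone with h | h
    · nlinarith
    · nlinarith
  have hzero : ∀ x, u₁ x = 0 ∧ u₂ x = 0 := by
    intro x
    have h := hvnonneg x
    rw [hvx x] at h
    have h1' := hneg1 x
    have h2' := hneg2 x
    constructor <;> linarith
  refine ⟨?_, fun x => (hzero x).1, fun x => (hzero x).2⟩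
  have : (fun x => (1 - Real.exp (u₁ x)) * (1 - Real.exp (u₂ x))) = fun _ => (0:ℝ) := by
    funext x
    rw [(hzero x).1, (hzero x).2]
    simp
  rw [this]
  simp
end
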